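/- Let A be a Banach lattice algebra with identity e. Then the order ideal A_e generated by e is a projection band in A: for every x ∈ A there exist unique y, z ∈ A such that x = y + z, y ∈ A_e, and |z| ⊓ |w| = 0 for every w ∈ A_e. -/

import Mathlib

/-!
The heart of the proof: if `0 ≤ w ∈ A_e` and `‖w‖ < μ`, then `w ≤ μ e`. Indeed the Neumann series
gives a positive left inverse `s` of `g = μ e - w`; since `g ∈ A_e`, the disjoint parts of `g`
satisfy `g⁺ g⁻ ≤ c (g⁺ ⊓ g⁻) = 0`, whence `g⁻ = s g g⁻ = -s (g⁻)² ≤ 0`. Consequently, for `u ≥ 0`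
the truncations `u ⊓ t e` stop growing at `y = u ⊓ μ e` once `μ > ‖u‖`, so `u - y` is disjoint
from `A_e`. Uniqueness holds because `A_e` meets its disjoint complement only in `0`.
-/

def orderIdealOfUnit {A : Type*} [NormedAddCommGroup A] [Lattice A] [IsOrderedAddMonoid A]
    [HasSolidNorm A] [NormedSpace ℝ A]
    (e : A) : Set A :=
  {x : A | ∃ l : ℝ, 0 ≤ l ∧ |x| ≤ l • e}

open Filter Topology

section LatticeOrderedGroup

variable {α : Type*} [Lattice α] [AddCommGroup α] [IsOrderedAddMonoid α]

theorem abs_sub_le_abs_add_abs (a b : α) : |a - b| ≤ |a| + |b| := by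
  simpa [sub_eq_add_neg] using abs_add_le a (-b)

theorem add_inf_le_inf_add_inf {a b c : α} (ha : 0 ≤ a) (hb : 0 ≤ b) (hc : 0 ≤ c) :
    (a + b) ⊓ c ≤ a ⊓ c + b ⊓ c := by
  have h₁ : (a + b) ⊓ c ≤ a ⊓ c + b :=
    calc (a + b) ⊓ c ≤ (a + b) ⊓ (c + b) := inf_le_inf_left _ (le_add_of_nonneg_right hb)
      _ = a ⊓ c + b := (inf_add a c b).symm
  have h₂ : (a + b) ⊓ c ≤ a ⊓ c + c := inf_le_right.trans (le_add_of_nonneg_left (le_inf ha hc))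
  calc (a + b) ⊓ c ≤ (a ⊓ c + b) ⊓ (a ⊓ c + c) := le_inf h₁ h₂
    _ = a ⊓ c + b ⊓ c := (add_inf b c (a ⊓ c)).symm

theorem abs_sub_inf_eq_zero {a b c : α} (hc : 0 ≤ c) (ha : |a| ⊓ c = 0) (hb : |b| ⊓ c = 0) :
    |a - b| ⊓ c = 0 := by
  refine le_antisymm ?_ (le_inf (abs_nonneg _) hc)
  calc |a - b| ⊓ c ≤ (|a| + |b|) ⊓ c := inf_le_inf_right _ (abs_sub_le_abs_add_abs a b)
    _ ≤ |a| ⊓ c + |b| ⊓ c := add_inf_le_inf_add_inf (abs_nonneg a) (abs_nonneg b) hc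
    _ = 0 := by rw [ha, hb, add_zero]

def IsBandDecomposition (S : Set α) (x y z : α) : Prop :=
  x = y + z ∧ y ∈ S ∧ ∀ w ∈ S, |z| ⊓ |w| = 0

variable {S : Set α}

theorem IsBandDecomposition.sub (hS : ∀ a ∈ S, ∀ b ∈ S, a - b ∈ S) {x y z x' y' z' : α}
    (h : IsBandDecomposition S x y z) (h' : IsBandDecomposition S x' y' z') :
    IsBandDecomposition S (x - x') (y - y') (z - z') := by
  obtain ⟨rfl, hy, hz⟩ := h
  obtain ⟨rfl, hy', hz'⟩ := h'
  exact ⟨by abel, hS y hy y' hy',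
    fun w hw => abs_sub_inf_eq_zero (abs_nonneg w) (hz w hw) (hz' w hw)⟩

theorem IsBandDecomposition.unique (hS : ∀ a ∈ S, ∀ b ∈ S, a - b ∈ S) {x y z y' z' : α}
    (h : IsBandDecomposition S x y z) (h' : IsBandDecomposition S x y' z') : y = y' ∧ z = z' := by
  obtain ⟨hx, hy, hz⟩ := h
  obtain ⟨hx', hy', hz'⟩ := h'
  have hd : y - y' ∈ S := hS y hy y' hy'
  have hzy : z - z' = y' - y := sub_eq_sub_iff_add_eq_add.2 (by rw [add_comm, ← hx, hx'])
  have habs : |y - y'| = 0 := by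
    simpa [hzy, abs_sub_comm] using abs_sub_inf_eq_zero (abs_nonneg _) (hz _ hd) (hz' _ hd)
  have hyy : y = y' :=
    sub_eq_zero.1 (le_antisymm (habs ▸ le_abs_self _) (neg_nonpos.1 (habs ▸ neg_le_abs _)))
  subst hyy
  exact ⟨rfl, add_left_cancel (hx.symm.trans hx')⟩

theorem existsUnique_isBandDecomposition (hS : ∀ a ∈ S, ∀ b ∈ S, a - b ∈ S)
    (h : ∀ u, 0 ≤ u → ∃ y z, IsBandDecomposition S u y z) (x : α) :
    ∃! yz : α × α, IsBandDecomposition S x yz.1 yz.2 := by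
  obtain ⟨y₁, z₁, h₁⟩ := h x⁺ (posPart_nonneg x)
  obtain ⟨y₂, z₂, h₂⟩ := h x⁻ (negPart_nonneg x)
  have h := h₁.sub hS h₂
  rw [posPart_sub_negPart] at h
  refine ⟨(y₁ - y₂, z₁ - z₂), h, fun yz h' => ?_⟩
  obtain ⟨hy, hz⟩ := h'.unique hS h
  exact Prod.ext hy hz

end LatticeOrderedGroup

section TopologicalAddGroup

variable {E : Type*} [AddCommGroup E] [TopologicalSpace E] [IsTopologicalAddGroup E] [T2Space E]

theorem hasSum_sub_succ_of_tendsto_zero {d : ℕ → E} (hs : Summable fun n => d n - d (n + 1))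
    (hd : Tendsto d atTop (𝓝 0)) : HasSum (fun n => d n - d (n + 1)) (d 0) := by
  rw [hs.hasSum_iff_tendsto_nat]
  simp_rw [Finset.sum_range_sub']
  simpa using tendsto_const_nhds.sub hd

end TopologicalAddGroup

section NormedLattice

variable {A : Type*} [NormedAddCommGroup A] [Lattice A] [IsOrderedAddMonoid A] [HasSolidNorm A]

theorem norm_le_norm_of_nonneg_of_le {a b : A} (ha : 0 ≤ a) (hab : a ≤ b) : ‖a‖ ≤ ‖b‖ :=
  norm_le_norm_of_abs_le_abs (by rwa [abs_of_nonneg ha, abs_of_nonneg (ha.trans hab)])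

variable [NormedSpace ℝ A]

theorem sub_mem_orderIdealOfUnit {e x y : A} (hx : x ∈ orderIdealOfUnit e)
    (hy : y ∈ orderIdealOfUnit e) : x - y ∈ orderIdealOfUnit e := by
  obtain ⟨l, hl, hxl⟩ := hx
  obtain ⟨m, hm, hym⟩ := hy
  refine ⟨l + m, add_nonneg hl hm, ?_⟩
  calc |x - y| ≤ |x| + |y| := abs_sub_le_abs_add_abs x y
    _ ≤ l • e + m • e := add_le_add hxl hym
    _ = (l + m) • e := (add_smul l m e).symm

variable [PosSMulStrictMono ℝ A]

theorem eq_zero_of_forall_natCast_smul_le {a : A} {C : ℝ} (ha : 0 ≤ a)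
    (h : ∀ n : ℕ, ∃ v, (n : ℝ) • a ≤ v ∧ ‖v‖ ≤ C) : a = 0 := by
  have hbound (n : ℕ) : n * ‖a‖ ≤ C := by
    obtain ⟨v, hav, hv⟩ := h n
    have := norm_le_norm_of_nonneg_of_le (smul_nonneg n.cast_nonneg ha) hav
    rw [norm_smul, Real.norm_natCast] at this
    linarith
  by_contra hne
  obtain ⟨n, hn⟩ := exists_nat_gt (C / ‖a‖)
  rw [div_lt_iff₀ (norm_pos_iff.2 hne)] at hn
  linarith [hbound n]

end NormedLattice

namespace BanachLatticeAlgebra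

section OrderedModule

variable {R M : Type*} [CommSemiring R] [AddCommGroup M] [PartialOrder M] [IsOrderedAddMonoid M]
  [Module R M] (mul : M →ₗ[R] M →ₗ[R] M)

theorem mul_le_mul_of_nonneg_left (mul_nonneg : ∀ a b : M, 0 ≤ a → 0 ≤ b → 0 ≤ mul a b)
    {a b c : M} (h : b ≤ c) (ha : 0 ≤ a) : mul a b ≤ mul a c := by
  simpa using mul_nonneg a (c - b) ha (sub_nonneg.2 h)

theorem mul_le_mul_of_nonneg_right (mul_nonneg : ∀ a b : M, 0 ≤ a → 0 ≤ b → 0 ≤ mul a b)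
    {a b c : M} (h : b ≤ c) (ha : 0 ≤ a) : mul b a ≤ mul c a := by
  simpa using mul_nonneg (c - b) a (sub_nonneg.2 h) ha

end OrderedModule

section LatticeOrderedModule

variable {𝕜 M : Type*} [Field 𝕜] [LinearOrder 𝕜] [IsStrictOrderedRing 𝕜]
  [Lattice M] [AddCommGroup M] [IsOrderedAddMonoid M] [Module 𝕜 M] [PosSMulStrictMono 𝕜 M]
  (mul : M →ₗ[𝕜] M →ₗ[𝕜] M)

theorem mul_eq_zero_of_inf_eq_zero (mul_nonneg : ∀ a b : M, 0 ≤ a → 0 ≤ b → 0 ≤ mul a b) {e : M}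
    (one_mul : ∀ a : M, mul e a = a) (mul_one : ∀ a : M, mul a e = a) {a b : M} {c : 𝕜}
    (hc : 0 < c) (ha : 0 ≤ a) (hb : 0 ≤ b) (hae : a ≤ c • e) (hbe : b ≤ c • e) (hab : a ⊓ b = 0) :
    mul a b = 0 := by
  have h₁ : mul a b ≤ c • a := by
    simpa [mul_one] using mul_le_mul_of_nonneg_left mul mul_nonneg hbe ha
  have h₂ : mul a b ≤ c • b := by
    simpa [one_mul] using mul_le_mul_of_nonneg_right mul mul_nonneg hae hb
  have h : mul a b ≤ c • (a ⊓ b) := by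
    rw [show c • (a ⊓ b) = c • a ⊓ c • b from (OrderIso.smulRight hc).map_inf a b]
    exact le_inf h₁ h₂
  rw [hab, smul_zero] at h
  exact le_antisymm h (mul_nonneg a b ha hb)

theorem nonneg_of_mul_eq_identity (mul_assoc : ∀ a b c : M, mul (mul a b) c = mul a (mul b c))
    (mul_nonneg : ∀ a b : M, 0 ≤ a → 0 ≤ b → 0 ≤ mul a b) {e : M}
    (one_mul : ∀ a : M, mul e a = a) (mul_one : ∀ a : M, mul a e = a) {s g : M} {c : 𝕜}
    (hc : 0 < c) (hg : |g| ≤ c • e) (hs : 0 ≤ s) (hsg : mul s g = e) : 0 ≤ g := by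
  have hg_pos : g⁺ ≤ c • e := (le_add_of_nonneg_right (negPart_nonneg g)).trans
    ((posPart_add_negPart g).trans_le hg)
  have hg_neg : g⁻ ≤ c • e := (le_add_of_nonneg_left (posPart_nonneg g)).trans
    ((posPart_add_negPart g).trans_le hg)
  have hdisj : mul g⁺ g⁻ = 0 := mul_eq_zero_of_inf_eq_zero mul mul_nonneg one_mul mul_one hc
    (posPart_nonneg g) (negPart_nonneg g) hg_pos hg_neg (posPart_inf_negPart_eq_zero g)
  have hgg : mul g g⁻ = -mul g⁻ g⁻ :=
    calc mul g g⁻ = mul (g⁺ - g⁻) g⁻ := by rw [posPart_sub_negPart]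
      _ = -mul g⁻ g⁻ := by rw [map_sub, LinearMap.sub_apply, hdisj, zero_sub]
  have hneg : g⁻ ≤ 0 :=
    calc g⁻ = mul (mul s g) g⁻ := by rw [hsg, one_mul]
      _ = -mul s (mul g⁻ g⁻) := by rw [mul_assoc, hgg, map_neg]
      _ ≤ 0 := neg_nonpos.2 (mul_nonneg _ _ hs
          (mul_nonneg _ _ (negPart_nonneg g) (negPart_nonneg g)))
  exact negPart_eq_zero.1 (le_antisymm hneg (negPart_nonneg g))

end LatticeOrderedModule

variable {A : Type*} [NormedAddCommGroup A] [Lattice A] [IsOrderedAddMonoid A] [HasSolidNorm A]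
  [NormedSpace ℝ A] [PosSMulStrictMono ℝ A] (mul : A →ₗ[ℝ] A →ₗ[ℝ] A)

/-- With `p = e⁺` and `q = e⁻`, expanding `e q = q`, `q e = q` and `e p = p` gives `q ≤ p q` and
`p + q ≤ p p`, so the powers `pⁿ⁺¹ ≥ p + n q` stay in the unit ball; hence `q = 0`. -/
theorem identity_nonneg (norm_mul_le : ∀ a b : A, ‖mul a b‖ ≤ ‖a‖ * ‖b‖)
    (mul_nonneg : ∀ a b : A, 0 ≤ a → 0 ≤ b → 0 ≤ mul a b) {e : A}
    (one_mul : ∀ a : A, mul e a = a) (mul_one : ∀ a : A, mul a e = a) (norm_e : ‖e‖ = 1) :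
    0 ≤ e := by
  set p := e⁺
  set q := e⁻
  have hp : 0 ≤ p := posPart_nonneg e
  have hq : 0 ≤ q := negPart_nonneg e
  have he : e = p - q := (posPart_sub_negPart e).symm
  have hqq : 0 ≤ mul q q := mul_nonneg q q hq hq
  have hpq : q ≤ mul p q := by
    have := one_mul q
    rw [he, map_sub, LinearMap.sub_apply, sub_eq_iff_eq_add] at this
    rw [this]
    exact le_add_of_nonneg_right hqq
  have hpp : p + q ≤ mul p p := by
    have h₁ := one_mul p
    have h₂ := mul_one q
    rw [he, map_sub, LinearMap.sub_apply, sub_eq_iff_eq_add] at h₁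
    rw [he, map_sub, sub_eq_iff_eq_add] at h₂
    rw [h₁, h₂, ← add_assoc]
    exact le_add_of_nonneg_right hqq
  have hp_norm : ‖p‖ ≤ 1 := by
    rw [← norm_e, ← norm_abs_eq_norm e, ← posPart_add_negPart e]
    exact norm_le_norm_of_nonneg_of_le hp (le_add_of_nonneg_right hq)
  have hpow (n : ℕ) : p + (n : ℝ) • q ≤ (mul p)^[n] p ∧ ‖(mul p)^[n] p‖ ≤ 1 := by
    induction n with
    | zero => simpa using hp_norm
    | succ n ih =>
      rw [Function.iterate_succ_apply']
      refine ⟨?_, (norm_mul_le _ _).trans (mul_le_one₀ hp_norm (norm_nonneg _) ih.2)⟩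
      calc p + ((n + 1 : ℕ) : ℝ) • q = (p + q) + (n : ℝ) • q := by push_cast; module
        _ ≤ mul p p + (n : ℝ) • mul p q :=
          add_le_add hpp (smul_le_smul_of_nonneg_left hpq n.cast_nonneg)
        _ = mul p (p + (n : ℝ) • q) := by rw [map_add, map_smul]
        _ ≤ mul p ((mul p)^[n] p) := mul_le_mul_of_nonneg_left mul mul_nonneg ih.1 hp
  have hq0 : q = 0 := eq_zero_of_forall_natCast_smul_le hq fun n =>
    ⟨_, (le_add_of_nonneg_left hp).trans (hpow n).1, (hpow n).2⟩
  exact negPart_eq_zero.1 hq0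

theorem exists_nonneg_mul_smul_sub_eq [CompleteSpace A]
    (norm_mul_le : ∀ a b : A, ‖mul a b‖ ≤ ‖a‖ * ‖b‖)
    (mul_nonneg : ∀ a b : A, 0 ≤ a → 0 ≤ b → 0 ≤ mul a b) {e : A}
    (mul_one : ∀ a : A, mul a e = a) (he : 0 ≤ e) {w : A} {μ : ℝ} (hw : 0 ≤ w) (hμ : ‖w‖ < μ) :
    ∃ s, 0 ≤ s ∧ mul s (μ • e - w) = e := by
  have hμ0 : 0 < μ := (norm_nonneg w).trans_lt hμ
  have hr0 : 0 ≤ ‖w‖ * μ⁻¹ := by positivity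
  have hr1 : ‖w‖ * μ⁻¹ < 1 := by rwa [mul_inv_lt_iff₀ hμ0, _root_.one_mul]
  set T : A → A := fun x => μ⁻¹ • mul x w
  set d : ℕ → A := fun n => T^[n] e
  have hd_succ (n : ℕ) : d (n + 1) = T (d n) := Function.iterate_succ_apply' T n e
  have hd_nonneg (n : ℕ) : 0 ≤ d n := by
    induction n with
    | zero => exact he
    | succ n ih => rw [hd_succ]; exact smul_nonneg (by positivity) (mul_nonneg _ _ ih hw)
  have hd_norm (n : ℕ) : ‖d n‖ ≤ ‖e‖ * (‖w‖ * μ⁻¹) ^ n := by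
    induction n with
    | zero => simp [d]
    | succ n ih =>
      rw [hd_succ, norm_smul, Real.norm_of_nonneg (by positivity)]
      calc μ⁻¹ * ‖mul (d n) w‖ ≤ μ⁻¹ * (‖d n‖ * ‖w‖) := by gcongr; exact norm_mul_le _ _
        _ ≤ μ⁻¹ * ((‖e‖ * (‖w‖ * μ⁻¹) ^ n) * ‖w‖) := by gcongr
        _ = ‖e‖ * (‖w‖ * μ⁻¹) ^ (n + 1) := by ring
  have hd_tendsto : Tendsto d atTop (𝓝 0) := squeeze_zero_norm hd_norm
    (by simpa using (tendsto_pow_atTop_nhds_zero_of_lt_one hr0 hr1).const_mul ‖e‖)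
  have hsum : Summable fun n => μ⁻¹ • d n := by
    refine .of_norm_bounded ((summable_geometric_of_lt_one hr0 hr1).mul_left (μ⁻¹ * ‖e‖)) ?_
    intro n
    rw [norm_smul, Real.norm_of_nonneg (by positivity), _root_.mul_assoc]
    gcongr
    exact hd_norm n
  set g := μ • e - w
  have htel (n : ℕ) : mul (μ⁻¹ • d n) g = d n - d (n + 1) := by
    rw [hd_succ]
    simp only [g, T, map_smul, map_sub, LinearMap.smul_apply, mul_one, smul_smul,
      mul_inv_cancel₀ hμ0.ne', one_smul]
  let R : A →L[ℝ] A := (mul.flip g).mkContinuous ‖g‖ fun x => by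
    simpa [mul_comm] using norm_mul_le x g
  have hR : HasSum (fun n => d n - d (n + 1)) (mul (∑' n, μ⁻¹ • d n) g) := by
    rw [← funext htel]
    exact R.hasSum hsum.hasSum
  refine ⟨∑' n, μ⁻¹ • d n, tsum_nonneg fun n => smul_nonneg (by positivity) (hd_nonneg n), ?_⟩
  exact hR.unique (by simpa [d] using hasSum_sub_succ_of_tendsto_zero hR.summable hd_tendsto)

theorem le_smul_of_norm_lt [CompleteSpace A]
    (mul_assoc : ∀ a b c : A, mul (mul a b) c = mul a (mul b c))
    (norm_mul_le : ∀ a b : A, ‖mul a b‖ ≤ ‖a‖ * ‖b‖)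
    (mul_nonneg : ∀ a b : A, 0 ≤ a → 0 ≤ b → 0 ≤ mul a b) {e : A}
    (one_mul : ∀ a : A, mul e a = a) (mul_one : ∀ a : A, mul a e = a) (he : 0 ≤ e) {w : A}
    {l μ : ℝ} (hw : 0 ≤ w) (hl : 0 ≤ l) (hwl : w ≤ l • e) (hμ : ‖w‖ < μ) : w ≤ μ • e := by
  have hμ0 : 0 < μ := (norm_nonneg w).trans_lt hμ
  obtain ⟨s, hs, hsg⟩ :=
    exists_nonneg_mul_smul_sub_eq mul norm_mul_le mul_nonneg mul_one he hw hμ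
  have hg : |μ • e - w| ≤ (μ + l) • e :=
    calc |μ • e - w| ≤ |μ • e| + |w| := abs_sub_le_abs_add_abs _ _
      _ = μ • e + w := by rw [abs_of_nonneg (smul_nonneg hμ0.le he), abs_of_nonneg hw]
      _ ≤ μ • e + l • e := by gcongr
      _ = (μ + l) • e := (add_smul μ l e).symm
  exact sub_nonneg.1 <| nonneg_of_mul_eq_identity mul mul_assoc mul_nonneg one_mul mul_one
    (by positivity) hg hs hsg

theorem exists_isBandDecomposition_of_nonneg [CompleteSpace A]
    (mul_assoc : ∀ a b c : A, mul (mul a b) c = mul a (mul b c))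
    (norm_mul_le : ∀ a b : A, ‖mul a b‖ ≤ ‖a‖ * ‖b‖)
    (mul_nonneg : ∀ a b : A, 0 ≤ a → 0 ≤ b → 0 ≤ mul a b) {e : A}
    (one_mul : ∀ a : A, mul e a = a) (mul_one : ∀ a : A, mul a e = a) (he : 0 ≤ e) {u : A}
    (hu : 0 ≤ u) : ∃ y z, IsBandDecomposition (orderIdealOfUnit e) u y z := by
  set μ := ‖u‖ + 1
  have hμ : 0 ≤ μ := by positivity
  have hdom (t : ℝ) (ht : 0 ≤ t) : u ⊓ t • e ≤ μ • e := by
    have h0 : 0 ≤ u ⊓ t • e := le_inf hu (smul_nonneg ht he)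
    exact le_smul_of_norm_lt mul mul_assoc norm_mul_le mul_nonneg one_mul mul_one he h0 ht
      inf_le_right ((norm_le_norm_of_nonneg_of_le h0 inf_le_left).trans_lt (lt_add_one _))
  set y := u ⊓ μ • e
  have hy : 0 ≤ y := le_inf hu (smul_nonneg hμ he)
  have hz : 0 ≤ u - y := sub_nonneg.2 inf_le_left
  have hdisj (t : ℝ) (ht : 0 ≤ t) : (u - y) ⊓ t • e = 0 := by
    have h : y + (u - y) ⊓ t • e ≤ y :=
      calc y + (u - y) ⊓ t • e = u ⊓ (y + t • e) := by rw [add_inf, add_sub_cancel]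
        _ ≤ u ⊓ (μ + t) • e := by
          rw [add_smul]
          gcongr
          exact inf_le_right
        _ ≤ y := le_inf inf_le_left (hdom _ (by positivity))
    exact le_antisymm (by simpa using h) (le_inf hz (smul_nonneg ht he))
  refine ⟨y, u - y, (add_sub_cancel y u).symm, ⟨μ, hμ, (abs_of_nonneg hy).trans_le inf_le_right⟩,
    fun w ⟨t, ht, hwt⟩ => le_antisymm ?_ (le_inf (abs_nonneg _) (abs_nonneg _))⟩
  calc |u - y| ⊓ |w| ≤ (u - y) ⊓ t • e := by rw [abs_of_nonneg hz]; exact inf_le_inf_left _ hwt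
    _ = 0 := hdisj t ht

end BanachLatticeAlgebra

theorem ideal_generated_by_identity_is_projection_band
    {A : Type*} [NormedAddCommGroup A] [Lattice A] [IsOrderedAddMonoid A]
    [HasSolidNorm A] [NormedSpace ℝ A]
    [PosSMulStrictMono ℝ A] [CompleteSpace A]
    (mul : A →ₗ[ℝ] A →ₗ[ℝ] A)
    (mul_assoc : ∀ a b c : A, mul (mul a b) c = mul a (mul b c))
    (norm_mul_le : ∀ a b : A, ‖mul a b‖ ≤ ‖a‖ * ‖b‖)
    (mul_nonneg : ∀ a b : A, 0 ≤ a → 0 ≤ b → 0 ≤ mul a b)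
    (e : A) (one_mul : ∀ a : A, mul e a = a) (mul_one : ∀ a : A, mul a e = a)
    (norm_e : ‖e‖ = 1) :
    ∀ x : A, ∃! yz : A × A,
      x = yz.1 + yz.2 ∧ yz.1 ∈ orderIdealOfUnit e ∧
      ∀ w ∈ orderIdealOfUnit e, |yz.2| ⊓ |w| = 0 := by
  have he : 0 ≤ e :=
    BanachLatticeAlgebra.identity_nonneg mul norm_mul_le mul_nonneg one_mul mul_one norm_e
  exact existsUnique_isBandDecomposition (fun _ ha _ hb => sub_mem_orderIdealOfUnit ha hb)
    fun u hu => BanachLatticeAlgebra.exists_isBandDecomposition_of_nonneg mul mul_assoc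
      norm_mul_le mul_nonneg one_mul mul_one he hu
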